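/- For prime p, the p+1 bases of C^p given by the computational basis together with the bases B_k = { p^{-1/2} ∑_{l=0}^{p-1} ω^(k·l² + m·l) |l⟩ : m ∈ Z_p } for k ∈ Z_p (with 2^{-1} absorbed appropriately for p odd) form a complete set of p+1 mutually unbiased bases. -/

import Mathlib

/-- The vector `|v_k(m)⟩ = p^{-1/2} ∑_l ω^{k l² + m l} |l⟩` in `ℂ^p`,
where `ω = exp(2πi/p)`. -/
noncomputable def mubVec (p : ℕ) [NeZero p] (k m : ZMod p) :
    EuclideanSpace ℂ (Fin p) :=
  WithLp.toLp 2 fun (l : Fin p) => (1 / Real.sqrt p : ℝ) *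
    Complex.exp (2 * Real.pi * Complex.I / p) ^
      (k * ((l : ℕ) : ZMod p) ^ 2 + m * ((l : ℕ) : ZMod p)).val

/-!
Every vector of `B_k` is `p^{-1/2}` times the chirp `l ↦ ψ(k l² + m l)` for the standard additive
character `ψ` of `ZMod p`, so `⟪v_k(m), v_{k'}(m')⟫ = p⁻¹ S` with `S = ∑ₓ ψ(q x)`,
`q x = a x² + b x`, `a = k' - k`, `b = m' - m`. For `a = 0` this is orthogonality of characters.
For `a ≠ 0`, substituting `x = y + d` in `|S|² = ∑_{x,y} ψ(q x - q y)` gives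
`∑_d ψ(q d) ∑_y ψ(2 a d y)`; as `2a` is invertible (`p` odd) only `d = 0` survives, so `|S|² = p`.
Overlaps with the computational basis are single entries, of modulus `p^{-1/2}`.
-/

open Finset ZMod

namespace AddChar

variable {R K : Type*} [CommRing R] [Fintype R] [DecidableEq R] [RCLike K]

theorem norm_sum_quadratic_sq {ψ : AddChar R K} (hψ : ψ.IsPrimitive) {a : R}
    (ha : IsUnit (2 * a)) (b : R) :
    ‖∑ x, ψ (a * x ^ 2 + b * x)‖ ^ 2 = Fintype.card R := by
  set q : R → R := fun x => a * x ^ 2 + b * x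
  have shift (y d : R) : ψ (q (y + d)) * ψ (-q y) = ψ (q d) * ψ (y * (2 * a * d)) := by
    rw [← map_add_eq_mul, ← map_add_eq_mul]
    congr 1
    ring
  have two_mul_eq_zero (d : R) : 2 * a * d = 0 ↔ d = 0 := by
    rw [ha.mul_right_eq_zero]
  suffices ((‖∑ x, ψ (q x)‖ ^ 2 : ℝ) : K) = Fintype.card R by exact_mod_cast this
  calc ((‖∑ x, ψ (q x)‖ ^ 2 : ℝ) : K)
      = ∑ y, ∑ d, ψ (q (y + d)) * ψ (-q y) := by
        rw [RCLike.ofReal_pow, ← RCLike.mul_conj, map_sum, sum_mul_sum, sum_comm]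
        refine sum_congr rfl fun y _ => ?_
        rw [← map_neg_eq_conj]
        exact (Equiv.sum_comp (Equiv.addLeft y) fun x => ψ (q x) * ψ (-q y)).symm
    _ = ∑ d, ψ (q d) * ∑ y, ψ (y * (2 * a * d)) := by
        simp_rw [shift, mul_sum]
        exact sum_comm
    _ = Fintype.card R := by
        simp_rw [sum_mulShift _ hψ, two_mul_eq_zero]
        simp [q]

end AddChar

namespace ZMod

theorem bijective_natCast_finVal (n : ℕ) [NeZero n] :
    Function.Bijective fun l : Fin n => ((l : ℕ) : ZMod n) := by
  refine ⟨fun l l' h => Fin.ext ?_, fun x => ⟨⟨x.val, x.val_lt⟩, natCast_zmod_val x⟩⟩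
  simpa [val_natCast_of_lt l.isLt, val_natCast_of_lt l'.isLt] using congrArg val h

theorem sum_fin_natCast {M : Type*} [AddCommMonoid M] (n : ℕ) [NeZero n] (f : ZMod n → M) :
    ∑ l : Fin n, f (l : ℕ) = ∑ x, f x :=
  Fintype.sum_bijective _ (bijective_natCast_finVal n) _ _ fun _ => rfl

theorem exp_two_pi_I_div_pow_val (n : ℕ) [NeZero n] (c : ZMod n) :
    Complex.exp (2 * Real.pi * Complex.I / n) ^ c.val = stdAddChar c := by
  rw [stdAddChar_apply, toCircle_apply, ← Complex.exp_nat_mul]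
  ring_nf

end ZMod

section mubVec

variable {p : ℕ} [NeZero p]

theorem mubVec_apply (k m : ZMod p) (l : Fin p) :
    mubVec p k m l = ((Real.sqrt p)⁻¹ : ℝ) *
      stdAddChar (k * ((l : ℕ) : ZMod p) ^ 2 + m * ((l : ℕ) : ZMod p)) := by
  rw [mubVec, PiLp.toLp_apply, one_div, exp_two_pi_I_div_pow_val]

theorem inner_mubVec (k m k' m' : ZMod p) :
    inner ℂ (mubVec p k m) (mubVec p k' m') =
      (p : ℂ)⁻¹ * ∑ x : ZMod p, stdAddChar ((k' - k) * x ^ 2 + (m' - m) * x) := by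
  have hsq : (((Real.sqrt p)⁻¹ : ℝ) : ℂ) * ((Real.sqrt p)⁻¹ : ℝ) = (p : ℂ)⁻¹ := by
    rw [← Complex.ofReal_mul, ← mul_inv, Real.mul_self_sqrt p.cast_nonneg]
    push_cast; rfl
  rw [PiLp.inner_apply, mul_sum, ← sum_fin_natCast p]
  refine sum_congr rfl fun l _ => ?_
  rw [RCLike.inner_apply, mubVec_apply, mubVec_apply, map_mul, Complex.conj_ofReal,
    ← AddChar.map_neg_eq_conj, mul_mul_mul_comm, hsq, ← AddChar.map_add_eq_mul]
  ring_nf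


theorem inner_mubVec_same (k m m' : ZMod p) :
    inner ℂ (mubVec p k m) (mubVec p k m') = if m = m' then 1 else 0 := by
  simp_rw [inner_mubVec, sub_self, zero_mul, zero_add, mul_comm _ (_ : ZMod p),
    AddChar.sum_mulShift _ (isPrimitive_stdAddChar p), ZMod.card, sub_eq_zero, eq_comm (a := m')]
  split_ifs
  · exact inv_mul_cancel₀ (NeZero.ne _)
  · simp

theorem orthonormal_mubVec (k : ZMod p) : Orthonormal ℂ (mubVec p k) :=
  orthonormal_iff_ite.2 (inner_mubVec_same k)

theorem span_mubVec_eq_top (k : ZMod p) : Submodule.span ℂ (Set.range (mubVec p k)) = ⊤ :=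
  (orthonormal_mubVec k).linearIndependent.span_eq_top_of_card_eq_finrank (by simp)

theorem norm_inner_mubVec_sq {k k' : ZMod p} (hk : IsUnit (2 * (k' - k))) (m m' : ZMod p) :
    ‖inner ℂ (mubVec p k m) (mubVec p k' m')‖ ^ 2 = 1 / p := by
  rw [inner_mubVec, norm_mul, mul_pow,
    AddChar.norm_sum_quadratic_sq (isPrimitive_stdAddChar p) hk, ZMod.card, norm_inv,
    Complex.norm_natCast]
  field_simp

theorem norm_inner_single_mubVec_sq (k m : ZMod p) (l : Fin p) :
    ‖inner ℂ (EuclideanSpace.single l (1 : ℂ)) (mubVec p k m)‖ ^ 2 = 1 / p := by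
  rw [EuclideanSpace.inner_single_left, map_one, one_mul, mubVec_apply, norm_mul,
    AddChar.norm_apply, mul_one, Complex.norm_real, norm_inv, Real.norm_eq_abs,
    abs_of_nonneg (Real.sqrt_nonneg _), inv_pow, Real.sq_sqrt p.cast_nonneg, one_div]

end mubVec

theorem odd_prime_complete_mubs (p : ℕ) [hp : Fact p.Prime] (hp3 : 3 ≤ p) :
    -- each B_k is an orthonormal basis of ℂ^p
    (∀ k : ZMod p, Orthonormal ℂ (mubVec p k) ∧
        ⊤ ≤ Submodule.span ℂ (Set.range (mubVec p k))) ∧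
    -- the bases B_k and B_k' are mutually unbiased for k ≠ k'
    (∀ k k' : ZMod p, k ≠ k' → ∀ m m' : ZMod p,
        ‖(inner ℂ (mubVec p k m) (mubVec p k' m') : ℂ)‖ ^ 2 = 1 / p) ∧
    -- each B_k is mutually unbiased with the computational basis
    (∀ (k m : ZMod p) (l : Fin p),
        ‖(inner ℂ (EuclideanSpace.single l (1 : ℂ)) (mubVec p k m) : ℂ)‖ ^ 2 = 1 / p) := by
  have h2 : (2 : ZMod p) ≠ 0 := Ring.two_ne_zero (by rw [ringChar_zmod_n]; omega)
  refine ⟨fun k => ⟨orthonormal_mubVec k, (span_mubVec_eq_top k).ge⟩,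
    fun k k' hk => norm_inner_mubVec_sq ?_, norm_inner_single_mubVec_sq⟩
  exact isUnit_iff_ne_zero.2 (mul_ne_zero h2 (sub_ne_zero.2 hk.symm))
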